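/- arXiv:1404.2862 — 4 statements merged into one kernel-verified Lean document; each statement's English description precedes it below -/
import Mathlib

section
/- For every s ∈ [0,1], (s + (1−s)²)² − 4·s·(1−s)³ > 4/25. Consequently the square of the energy gap of the 2×2 symmetric matrix !![s, s(1−s); s(1−s), (1−s)²], which equals its trace squared minus four times its determinant, exceeds (2/5)² throughout the adiabatic evolution. -/
/-- For every `s ∈ [0,1]`, `(s + (1-s)²)² - 4·s·(1-s)³ > 4/25`; consequently
the squared energy gap (trace² − 4·det) of the output Hamiltonian
`!![s, s(1-s); s(1-s), (1-s)²]` exceeds `(2/5)²` throughout the evolution. -/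
theorem multi_interaction_AQC_gap (s : ℝ) (hs : s ∈ Set.Icc (0 : ℝ) 1) :
    (s + (1 - s) ^ 2) ^ 2 - 4 * s * (1 - s) ^ 3 > 4 / 25 ∧
    (Matrix.trace (!![s, s * (1 - s); s * (1 - s), (1 - s) ^ 2] : Matrix (Fin 2) (Fin 2) ℝ)) ^ 2
        - 4 * (!![s, s * (1 - s); s * (1 - s), (1 - s) ^ 2] : Matrix (Fin 2) (Fin 2) ℝ).det
      > (2 / 5) ^ 2 := by
  have key : (s + (1 - s) ^ 2) ^ 2 - 4 * s * (1 - s) ^ 3 > 4 / 25 := by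
    nlinarith [sq_nonneg (s ^ 2 - 7/5 * s + 3/10), sq_nonneg (s - 9/22)]
  refine ⟨key, ?_⟩
  have ht : Matrix.trace (!![s, s * (1 - s); s * (1 - s), (1 - s) ^ 2] : Matrix (Fin 2) (Fin 2) ℝ) = s + (1-s)^2 := by
    simp [Matrix.trace_fin_two]
  have hd : (!![s, s * (1 - s); s * (1 - s), (1 - s) ^ 2] : Matrix (Fin 2) (Fin 2) ℝ).det = s * (1-s)^3 := by
    simp [Matrix.det_fin_two]; ring
  rw [ht, hd]
  nlinarith [key]
end

section
/- Let s1, s2 ∈ (0,1), let P = !![1−s2, s2; s1, 1−s1], and let v = (v¹, v²)ᵀ ∈ ℝ². Then the iterates P^i · v converge as i → ∞ to α·(1,1)ᵀ, where α = (s1·v¹ + s2·v²)/(s1 + s2). In particular the iteration machine attains a steady state irrespective of the initial vector. -/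
open Filter

/-- For `s1, s2 ∈ (0,1)` and `P = !![1-s2, s2; s1, 1-s1]`, the iterates
`P^i *ᵥ v` converge to `α • (1,1)ᵀ` with `α = (s1*v¹ + s2*v²)/(s1+s2)`:
the iteration machine attains a steady state irrespective of the initial vector. -/
theorem markov_machine_steady_state (s1 s2 : ℝ)
    (hs1 : s1 ∈ Set.Ioo (0 : ℝ) 1) (hs2 : s2 ∈ Set.Ioo (0 : ℝ) 1)
    (v : Fin 2 → ℝ) :
    Tendsto
      (fun i : ℕ =>
        ((!![1 - s2, s2; s1, 1 - s1] : Matrix (Fin 2) (Fin 2) ℝ) ^ i).mulVec v)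
      atTop
      (nhds (((s1 * v 0 + s2 * v 1) / (s1 + s2)) • ![1, 1])) := by
  obtain ⟨h1, h1'⟩ := hs1
  obtain ⟨h2, h2'⟩ := hs2
  have hs : s1 + s2 ≠ 0 := by positivity
  set α : ℝ := (s1 * v 0 + s2 * v 1) / (s1 + s2) with hα
  set β : ℝ := (v 0 - v 1) / (s1 + s2) with hβ
  set lam : ℝ := 1 - s1 - s2 with hlam
  have key : ∀ i : ℕ,
      ((!![1 - s2, s2; s1, 1 - s1] : Matrix (Fin 2) (Fin 2) ℝ) ^ i).mulVec v
        = fun j : Fin 2 => α + lam ^ i * β * (if j = 0 then s2 else -s1) := by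
    intro i
    induction i with
    | zero =>
      funext j
      fin_cases j <;>
        simp [α, β, Matrix.mulVec] <;> field_simp <;> ring
    | succ n ih =>
      rw [pow_succ', ← Matrix.mulVec_mulVec, ih]
      funext j
      fin_cases j <;>
        simp [Matrix.mulVec, dotProduct, Fin.sum_univ_two, lam, pow_succ] <;> ring
  simp only [key]
  have hlim : Tendsto (fun i : ℕ => lam ^ i) atTop (nhds 0) := by
    apply tendsto_pow_atTop_nhds_zero_of_abs_lt_one
    rw [abs_lt]
    constructor <;> [nlinarith; nlinarith]
  rw [tendsto_pi_nhds]
  intro j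
  have h : Tendsto (fun i : ℕ => α + lam ^ i * β * (if j = 0 then s2 else -s1)) atTop
      (nhds (α + 0 * β * (if j = 0 then s2 else -s1))) :=
    tendsto_const_nhds.add ((hlim.mul_const β).mul_const _)
  fin_cases j <;> simpa using h
end

section
/- Let s1, s2, s3 ∈ ℝ with s3 ≠ 1. Define P = !![1−s2, s2; s1, 1−s1], P0 = !![(1−s2−s1·s3)/(1−s3), (s2−s3+s1·s3)/(1−s3); s1, 1−s1], and P1 = !![(1−s2)(1−s3), s2(1−s3)+s3; s1(1−s3), (1−s1)(1−s3)+s3]. Then the product of the two one-step transition matrices of the feed-forward machine equals the two-step transition matrix of the original machine: P1 · P0 = P². -/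
/-- The alternating one-step transition matrices `P0`, `P1` of the feed-forward
machine compose over two steps to the two-step transition matrix of the original
machine: `P1 * P0 = P ^ 2`. -/
theorem feed_forward_two_step (s1 s2 s3 : ℝ) (hs3 : s3 ≠ 1) :
    (!![(1 - s2) * (1 - s3), s2 * (1 - s3) + s3;
        s1 * (1 - s3), (1 - s1) * (1 - s3) + s3] : Matrix (Fin 2) (Fin 2) ℝ) *
      !![(1 - s2 - s1 * s3) / (1 - s3), (s2 - s3 + s1 * s3) / (1 - s3);
         s1, 1 - s1] =
    (!![1 - s2, s2; s1, 1 - s1] : Matrix (Fin 2) (Fin 2) ℝ) ^ 2 := by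
  have h : (1 : ℝ) - s3 ≠ 0 := sub_ne_zero.mpr (Ne.symm hs3)
  rw [sq]
  ext i j
  fin_cases i <;> fin_cases j <;>
    simp [Matrix.mul_apply, Fin.sum_univ_succ] <;> field_simp <;> ring
end

section
/- There exist s1, s2, s3 ∈ (0,1) such that the matrix P0 = !![(1−s2−s1·s3)/(1−s3), (s2−s3+s1·s3)/(1−s3); s1, 1−s1] has a strictly negative entry. Hence the feed-forward machine equivalent to an internally stable Markov iteration machine need not itself be internally stable: its one-step transition matrices need not be stochastic even though their two-step product P² is stochastic. -/
/-- There exist `s1, s2, s3 ∈ (0,1)` such that the feed-forward one-step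
transition matrix `P0` has a strictly negative entry: the feed-forward machine
need not be internally stable. -/
theorem feed_forward_not_internally_stable :
    ∃ s1 s2 s3 : ℝ, s1 ∈ Set.Ioo (0 : ℝ) 1 ∧ s2 ∈ Set.Ioo (0 : ℝ) 1 ∧
      s3 ∈ Set.Ioo (0 : ℝ) 1 ∧
      ∃ i j : Fin 2,
        (!![(1 - s2 - s1 * s3) / (1 - s3), (s2 - s3 + s1 * s3) / (1 - s3);
            s1, 1 - s1] : Matrix (Fin 2) (Fin 2) ℝ) i j < 0 := by
  refine ⟨1/2, 1/8, 1/2, ⟨by norm_num, by norm_num⟩, ⟨by norm_num, by norm_num⟩,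
    ⟨by norm_num, by norm_num⟩, 0, 1, ?_⟩
  norm_num [Matrix.cons_val_zero, Matrix.cons_val_one]
end
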